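/- arXiv:2605.08377 — 5 statements merged into one kernel-verified Lean document; each statement's English description precedes it below -/
import Mathlib

section
/- Let Φ : Kⁿ → ℝᴹ be an indexed 2-Janossy latent map, i.e. Φ(x₁,…,xₙ) = Σ_{1≤i,j≤n} φ_{i,j}(xᵢ, xⱼ) for functions φ_{i,j} : K × K → ℝᴹ. Then for any a₁, a₂, y₁, y₂ (with all four perturbed points in K), the alternating second difference Σ_{η∈{0,1}²} (−1)^{η₁+η₂} Φ(a₁+η₁y₁, a₂+η₂y₂, x₃,…,xₙ) is independent of x₃,…,xₙ. -/
/-- The unit cube `[0,1]^d` in `ℝ^d`. -/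
def unitCube (d : ℕ) : Set (Fin d → ℝ) := {x | ∀ i, x i ∈ Set.Icc (0 : ℝ) 1}

lemma key_aux {α : Type*} {n : ℕ} (hn : 2 ≤ n)
    (h0 : 0 < n) (h1 : 1 < n)
    (f : α → α → ℝ) (A B : Fin 2 → α) (x x' : Fin n → α) (i j : Fin n) :
    ∑ η : Fin 2 × Fin 2, ((-1 : ℝ) ^ ((η.1 : ℕ) + (η.2 : ℕ))) *
      f ((Function.update (Function.update x ⟨0, h0⟩ (A η.1)) ⟨1, h1⟩ (B η.2)) i)
        ((Function.update (Function.update x ⟨0, h0⟩ (A η.1)) ⟨1, h1⟩ (B η.2)) j)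
    = ∑ η : Fin 2 × Fin 2, ((-1 : ℝ) ^ ((η.1 : ℕ) + (η.2 : ℕ))) *
      f ((Function.update (Function.update x' ⟨0, h0⟩ (A η.1)) ⟨1, h1⟩ (B η.2)) i)
        ((Function.update (Function.update x' ⟨0, h0⟩ (A η.1)) ⟨1, h1⟩ (B η.2)) j) := by
  classical
  by_cases hi1 : i = (⟨1, h1⟩ : Fin n) <;>
  by_cases hi0 : i = (⟨0, h0⟩ : Fin n) <;>
  by_cases hj1 : j = (⟨1, h1⟩ : Fin n) <;>
  by_cases hj0 : j = (⟨0, h0⟩ : Fin n) <;>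
    simp only [Function.update_apply, hi1, hi0, hj1, hj0, if_pos, if_neg,
      if_true, if_false, Fintype.sum_prod_type, Fin.sum_univ_two] <;>
    simp [Function.update_apply, hi1, hi0, hj1, hj0] <;>
    ring

/-- finite-difference rigidity for indexed 2-Janossy latent maps:
the alternating second difference in the first two coordinates is independent of
the tail variables. -/
theorem stmt_1 (d n M : ℕ) (hn : 2 ≤ n)
    (φ : Fin n → Fin n → unitCube d → unitCube d → Fin M → ℝ)
    (Φ : (Fin n → unitCube d) → Fin M → ℝ)
    (hΦ : ∀ x, Φ x = ∑ i : Fin n, ∑ j : Fin n, φ i j (x i) (x j))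
    (a₁ a₂ y₁ y₂ : Fin d → ℝ)
    (hm1 : ∀ η : Fin 2, a₁ + (η : ℕ) • y₁ ∈ unitCube d)
    (hm2 : ∀ η : Fin 2, a₂ + (η : ℕ) • y₂ ∈ unitCube d)
    (x x' : Fin n → unitCube d) :
    (∑ η : Fin 2 × Fin 2, ((-1 : ℝ) ^ ((η.1 : ℕ) + (η.2 : ℕ))) •
      Φ (Function.update
          (Function.update x ⟨0, by omega⟩ ⟨a₁ + (η.1 : ℕ) • y₁, hm1 η.1⟩)
          ⟨1, by omega⟩ ⟨a₂ + (η.2 : ℕ) • y₂, hm2 η.2⟩))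
    = ∑ η : Fin 2 × Fin 2, ((-1 : ℝ) ^ ((η.1 : ℕ) + (η.2 : ℕ))) •
      Φ (Function.update
          (Function.update x' ⟨0, by omega⟩ ⟨a₁ + (η.1 : ℕ) • y₁, hm1 η.1⟩)
          ⟨1, by omega⟩ ⟨a₂ + (η.2 : ℕ) • y₂, hm2 η.2⟩) := by
  funext m
  simp only [hΦ, Finset.sum_apply, Pi.smul_apply, smul_eq_mul, Finset.mul_sum]
  rw [Finset.sum_comm]
  conv_rhs => rw [Finset.sum_comm]
  refine Finset.sum_congr rfl fun i _ => ?_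
  rw [Finset.sum_comm]
  conv_rhs => rw [Finset.sum_comm]
  refine Finset.sum_congr rfl fun j _ => ?_
  exact key_aux hn (by omega) (by omega) (fun u v => φ i j u v m)
    (fun η => ⟨a₁ + (η : ℕ) • y₁, hm1 η⟩) (fun η => ⟨a₂ + (η : ℕ) • y₂, hm2 η⟩) x x' i j
end

section
/- Let Φ : Kⁿ → ℝᴹ be an indexed k-Janossy latent map, Φ(x₁,…,xₙ) = Σ_{1≤i₁,…,i_k≤n} φ_{i₁,…,i_k}(x_{i₁},…,x_{i_k}). Then for any base points a₁,…,a_k and increments y₁,…,y_k such that aᵢ + ηᵢyᵢ ∈ K for all ηᵢ ∈ {0,1}, the k-fold alternating sum Σ_{η∈{0,1}^k} (−1)^{|η|} Φ(a₁+η₁y₁,…,a_k+η_ky_k, x_{k+1},…,xₙ) is independent of the tail variables x_{k+1},…,xₙ. -/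
open Finset Function

theorem Fin.two_add_one_add_one (b : Fin 2) : b + 1 + 1 = b := by fin_cases b <;> rfl

theorem Fin.two_add_one_ne (b : Fin 2) : b + 1 ≠ b := by fin_cases b <;> decide

theorem neg_one_pow_val_two_add_one (b : Fin 2) :
    (-1 : ℝ) ^ ((b + 1 : Fin 2) : ℕ) = -(-1) ^ (b : ℕ) := by
  fin_cases b <;> simp

section AlternatingSum

variable {ι E : Type*} [Fintype ι] [DecidableEq ι] [AddCommGroup E] [Module ℝ E]

theorem neg_one_pow_sum_update_add_one (η : ι → Fin 2) (m : ι) :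
    (-1 : ℝ) ^ (∑ j, (update η m (η m + 1) j : ℕ)) = -(-1) ^ (∑ j, (η j : ℕ)) := by
  rw [← add_sum_erase _ _ (mem_univ m), ← add_sum_erase _ (fun j => (η j : ℕ)) (mem_univ m),
    sum_congr rfl fun j hj => by rw [update_of_ne (ne_of_mem_erase hj)], update_self,
    pow_add, pow_add, neg_one_pow_val_two_add_one, neg_mul]

theorem sum_neg_one_pow_smul_eq_zero_of_update_eq (f : (ι → Fin 2) → E) (m : ι)
    (hf : ∀ η b, f (update η m b) = f η) :
    ∑ η : ι → Fin 2, (-1 : ℝ) ^ (∑ j, (η j : ℕ)) • f η = 0 := by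
  refine sum_ninvolution (fun η => update η m (η m + 1)) (fun η => ?_) (fun η _ h => ?_)
    (fun _ => mem_univ _) (fun η => ?_)
  · rw [hf, neg_one_pow_sum_update_add_one, neg_smul, add_neg_cancel]
  · exact Fin.two_add_one_ne (η m) (by simpa using congrFun h m)
  · simp [Fin.two_add_one_add_one]

end AlternatingSum

theorem Fin.exists_forall_val_ne_of_le_val {k n : ℕ} (I : Fin k → Fin n) {j₀ : Fin k}
    (hj₀ : k ≤ I j₀) : ∃ m : Fin k, ∀ j, (I j : ℕ) ≠ m := by
  by_contra! hsurj
  have hrange : range k = univ.image (fun j => (I j : ℕ)) := by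
    refine eq_of_subset_of_card_le (fun m hm => ?_) ?_
    · obtain ⟨j, hj⟩ := hsurj ⟨m, mem_range.1 hm⟩
      exact mem_image.2 ⟨j, mem_univ _, hj⟩
    · simpa using card_image_le (s := (univ : Finset (Fin k)))
  have : (I j₀ : ℕ) ∈ range k := hrange ▸ mem_image_of_mem _ (mem_univ j₀)
  exact absurd (mem_range.1 this) (not_lt.2 hj₀)

theorem stmt_2_general (d n k M : ℕ)
    (φ : (Fin k → Fin n) → (Fin k → unitCube d) → Fin M → ℝ)
    (Φ : (Fin n → unitCube d) → Fin M → ℝ)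
    (hΦ : ∀ x, Φ x = ∑ I : Fin k → Fin n, φ I (fun j => x (I j)))
    (a y : Fin k → Fin d → ℝ)
    (hm : ∀ (j : Fin k) (η : Fin 2), a j + (η : ℕ) • y j ∈ unitCube d)
    (x x' : Fin n → unitCube d) :
    (∑ η : Fin k → Fin 2, ((-1 : ℝ) ^ (∑ j, (η j : ℕ))) •
      Φ (fun i => if h : (i : ℕ) < k
          then ⟨a ⟨(i : ℕ), h⟩ + ((η ⟨(i : ℕ), h⟩ : ℕ)) • y ⟨(i : ℕ), h⟩, hm _ _⟩
          else x i))
    = ∑ η : Fin k → Fin 2, ((-1 : ℝ) ^ (∑ j, (η j : ℕ))) •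
      Φ (fun i => if h : (i : ℕ) < k
          then ⟨a ⟨(i : ℕ), h⟩ + ((η ⟨(i : ℕ), h⟩ : ℕ)) • y ⟨(i : ℕ), h⟩, hm _ _⟩
          else x' i) := by
  set X : (Fin k → Fin 2) → (Fin n → unitCube d) → Fin n → unitCube d := fun η z i =>
    if h : (i : ℕ) < k
      then ⟨a ⟨i, h⟩ + ((η ⟨i, h⟩ : ℕ)) • y ⟨i, h⟩, hm _ _⟩ else z i
  simp only [hΦ, smul_sum]
  refine sum_comm.trans (Eq.trans (sum_congr rfl fun I _ => ?_) sum_comm)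
  by_cases hI : ∀ j, (I j : ℕ) < k
  · refine sum_congr rfl fun η _ => ?_
    congr 2
    funext j
    simp only [dif_pos (hI j)]
  · push Not at hI
    obtain ⟨j₀, hj₀⟩ := hI
    obtain ⟨m, hm_miss⟩ := Fin.exists_forall_val_ne_of_le_val I hj₀
    have hvanish (z : Fin n → unitCube d) :
        ∑ η : Fin k → Fin 2, (-1 : ℝ) ^ (∑ j, (η j : ℕ)) • φ I (fun j => X η z (I j)) = 0 := by
      refine sum_neg_one_pow_smul_eq_zero_of_update_eq _ m fun η b => ?_
      congr 1
      funext j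
      by_cases h : (I j : ℕ) < k
      · have hjm : (⟨I j, h⟩ : Fin k) ≠ m := fun hjm => hm_miss j (congrArg Fin.val hjm)
        simp only [X, dif_pos h, update_of_ne hjm]
      · simp only [X, dif_neg h]
    rw [hvanish, hvanish]

/-- finite-difference rigidity for indexed k-Janossy latent maps:
the k-fold alternating difference in the first k coordinates is independent of
the tail variables. -/
theorem stmt_2 (d n k M : ℕ) (hk : 1 ≤ k) (hkn : k < n)
    (φ : (Fin k → Fin n) → (Fin k → unitCube d) → Fin M → ℝ)
    (Φ : (Fin n → unitCube d) → Fin M → ℝ)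
    (hΦ : ∀ x, Φ x = ∑ I : Fin k → Fin n, φ I (fun j => x (I j)))
    (a y : Fin k → Fin d → ℝ)
    (hm : ∀ (j : Fin k) (η : Fin 2), a j + (η : ℕ) • y j ∈ unitCube d)
    (x x' : Fin n → unitCube d) :
    (∑ η : Fin k → Fin 2, ((-1 : ℝ) ^ (∑ j, (η j : ℕ))) •
      Φ (fun i => if h : (i : ℕ) < k
          then ⟨a ⟨(i : ℕ), h⟩ + ((η ⟨(i : ℕ), h⟩ : ℕ)) • y ⟨(i : ℕ), h⟩, hm _ _⟩
          else x i))
    = ∑ η : Fin k → Fin 2, ((-1 : ℝ) ^ (∑ j, (η j : ℕ))) •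
      Φ (fun i => if h : (i : ℕ) < k
          then ⟨a ⟨(i : ℕ), h⟩ + ((η ⟨(i : ℕ), h⟩ : ℕ)) • y ⟨(i : ℕ), h⟩, hm _ _⟩
          else x' i) :=
  stmt_2_general d n k M φ Φ hΦ a y hm x x'
end

section
/- Let Ψ : Kⁿ → ℝᴹ be continuous and permutation-invariant, and suppose there exist X, Y ∈ Kⁿ that are not related by any permutation but satisfy Ψ(X) = Ψ(Y). Then there exists a continuous permutation-invariant function g : Kⁿ → ℝ with g(X) ≠ g(Y); consequently g cannot be uniformly approximated by functions of the form ρ ∘ Ψ with ρ : ℝᴹ → ℝ continuous. -/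
/-- if a continuous permutation-invariant `Ψ` collides on two points
not related by a permutation, then some continuous permutation-invariant `g`
separates them, and `g` cannot be uniformly approximated by functions `ρ ∘ Ψ`. -/
theorem stmt_8 (d n M : ℕ)
    (Ψ : (Fin n → unitCube d) → Fin M → ℝ) (hΨc : Continuous Ψ)
    (hΨinv : ∀ (σ : Equiv.Perm (Fin n)) (x : Fin n → unitCube d),
      Ψ (fun i => x (σ i)) = Ψ x)
    (X Y : Fin n → unitCube d)
    (hXY : ¬ ∃ σ : Equiv.Perm (Fin n), (fun i => X (σ i)) = Y)
    (hcol : Ψ X = Ψ Y) :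
    ∃ g : (Fin n → unitCube d) → ℝ, Continuous g ∧
      (∀ (σ : Equiv.Perm (Fin n)) (x : Fin n → unitCube d), g (fun i => x (σ i)) = g x) ∧
      g X ≠ g Y ∧
      ∃ ε : ℝ, 0 < ε ∧ ∀ ρ : (Fin M → ℝ) → ℝ, Continuous ρ →
        ∃ x, ε ≤ |g x - ρ (Ψ x)| := by
  classical
  set g : (Fin n → unitCube d) → ℝ := fun x =>
    Finset.univ.inf' (Finset.univ_nonempty) fun σ : Equiv.Perm (Fin n) =>
      dist (fun i => x (σ i)) X with hg
  have hgc : Continuous g := by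
    have hrep : g = Finset.univ.inf' Finset.univ_nonempty
        (fun σ : Equiv.Perm (Fin n) => fun x => dist (fun i => x (σ i)) X) := by
      funext x; rw [Finset.inf'_apply]
    rw [hrep]
    exact Continuous.finset_inf' _ fun σ _ =>
      Continuous.dist (continuous_pi fun i => continuous_apply (σ i)) continuous_const
  have hginv : ∀ (σ : Equiv.Perm (Fin n)) (x : Fin n → unitCube d),
      g (fun i => x (σ i)) = g x := by
    intro σ x
    apply le_antisymm
    · apply Finset.le_inf'
      intro τ _
      have key : (fun i => (fun i => x (σ i)) ((σ⁻¹ * τ) i)) = fun i => x (τ i) := by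
        funext i; simp
      have h5 := Finset.inf'_le (f := fun τ : Equiv.Perm (Fin n) =>
        dist (fun i => (fun i => x (σ i)) (τ i)) X)
        (Finset.mem_univ (σ⁻¹ * τ))
      simp only [key] at h5
      exact h5
    · apply Finset.le_inf'
      intro τ _
      have key : (fun i => x ((σ * τ) i)) = fun i => (fun i => x (σ i)) (τ i) := by
        funext i; simp
      have h5 := Finset.inf'_le (f := fun τ : Equiv.Perm (Fin n) =>
        dist (fun i => x (τ i)) X)
        (Finset.mem_univ (σ * τ))
      simp only [key] at h5
      exact h5
  have hgX : g X = 0 := by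
    apply le_antisymm
    · have key : dist (fun i => X ((1 : Equiv.Perm (Fin n)) i)) X = 0 := by
        simp [Equiv.Perm.one_apply]
      have h5 := Finset.inf'_le (f := fun σ : Equiv.Perm (Fin n) =>
        dist (fun i => X (σ i)) X)
        (Finset.mem_univ (1 : Equiv.Perm (Fin n)))
      rw [key] at h5
      exact h5
    · exact Finset.le_inf' _ _ fun σ _ => dist_nonneg
  have hgY : 0 < g Y := by
    rw [hg]
    apply lt_of_le_of_ne (Finset.le_inf' _ _ fun σ _ => dist_nonneg)
    intro h
    obtain ⟨σ, -, hσ⟩ := Finset.exists_mem_eq_inf' (Finset.univ_nonempty)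
      (fun σ : Equiv.Perm (Fin n) => dist (fun i => Y (σ i)) X)
    rw [hσ] at h
    have heq : (fun i => Y (σ i)) = X := by
      have := dist_eq_zero.mp h.symm
      exact this
    apply hXY
    refine ⟨σ⁻¹, ?_⟩
    funext i
    have := congrFun heq (σ⁻¹ i)
    simp only [Equiv.Perm.inv_def, Equiv.apply_symm_apply] at this
    exact this.symm
  refine ⟨g, hgc, hginv, by rw [hgX]; exact fun h => absurd h.symm hgY.ne', g Y / 2,
    half_pos hgY, fun ρ hρ => ?_⟩
  by_contra h
  push_neg at h
  have h1 := h X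
  have h2 := h Y
  rw [hcol] at h1
  have : |g X - ρ (Ψ Y)| + |g Y - ρ (Ψ Y)| < g Y := by
    have := add_lt_add h1 h2
    linarith
  have h4 : g Y ≤ |g Y - ρ (Ψ Y)| + |g X - ρ (Ψ Y)| := by
    calc g Y = |g Y - g X| := by rw [hgX]; simp [abs_of_pos hgY]
      _ = |(g Y - ρ (Ψ Y)) + (ρ (Ψ Y) - g X)| := by ring_nf
      _ ≤ |g Y - ρ (Ψ Y)| + |ρ (Ψ Y) - g X| := abs_add_le _ _
      _ = |g Y - ρ (Ψ Y)| + |g X - ρ (Ψ Y)| := by rw [abs_sub_comm (ρ (Ψ Y))]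
  linarith
end

section
/- Given pairwise disjoint closed cubes C₁,…,Cₙ ⊂ (0,1)^d with affine homeomorphisms Tⱼ : K → Cⱼ and any continuous g : Kⁿ → ℝ, there exists a continuous permutation-invariant function f : Kⁿ → ℝ such that f(T₁t₁,…,Tₙtₙ) = g(t₁,…,tₙ) for all (t₁,…,tₙ) ∈ Kⁿ. -/
open Function Set Topology

instance unitCube.compactSpace (d : ℕ) : CompactSpace (unitCube d) :=
  isCompact_iff_compactSpace.mp <| by
    convert isCompact_Icc (a := (0 : Fin d → ℝ)) (b := 1)
    ext
    simp [unitCube, Pi.le_def, forall_and]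

variable {ι : Type*} [Fintype ι]

section Symmetrize

variable [DecidableEq ι] {α β : Type*} [AddCommMonoid β]

def symmetrize (F : (ι → α) → β) (x : ι → α) : β :=
  ∑ σ : Equiv.Perm ι, F (x ∘ σ)

theorem symmetrize_comp_perm (F : (ι → α) → β) (σ : Equiv.Perm ι) (x : ι → α) :
    symmetrize F (x ∘ σ) = symmetrize F x :=
  Fintype.sum_equiv (Equiv.mulLeft σ) _ _ fun _ => rfl

theorem symmetrize_eq_of_forall_ne_one {F : (ι → α) → β} {x : ι → α}
    (h : ∀ σ : Equiv.Perm ι, σ ≠ 1 → F (x ∘ σ) = 0) : symmetrize F x = F x :=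
  Finset.sum_eq_single_of_mem 1 (Finset.mem_univ _) fun σ _ hσ => h σ hσ

theorem Continuous.symmetrize [TopologicalSpace α] [TopologicalSpace β] [ContinuousAdd β]
    {F : (ι → α) → β} (hF : Continuous F) : Continuous (symmetrize F) :=
  continuous_finsetSum _ fun σ _ => hF.comp (continuous_pi fun i => continuous_apply (σ i))

end Symmetrize

variable {E K : Type*} [MetricSpace E] [TopologicalSpace K] [CompactSpace K]
  {T : ι → K → E}

theorem exists_cutoff_piMap (hTc : ∀ j, Continuous (T j))
    (hT : Pairwise fun i j => Disjoint (range (T i)) (range (T j))) :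
    ∃ χ : C(ι → E, ℝ), (∀ t, χ (Pi.map T t) = 1) ∧
      ∀ σ : Equiv.Perm ι, σ ≠ 1 → ∀ t, χ (Pi.map T t ∘ σ) = 0 := by
  have hΦ : Continuous (Pi.map T) := .piMap hTc
  set B := ⋃ σ ∈ {σ : Equiv.Perm ι | σ ≠ 1}, range fun t => Pi.map T t ∘ σ
  have hB : IsClosed B := (toFinite _).isClosed_biUnion fun σ _ =>
    (isCompact_range <| (continuous_pi fun i => continuous_apply (σ i)).comp hΦ).isClosed
  have hdisj : Disjoint B (range (Pi.map T)) := by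
    refine disjoint_right.mpr ?_
    rintro _ ⟨t, rfl⟩ hB
    obtain ⟨σ, hσ, s, hs⟩ := mem_iUnion₂.mp hB
    obtain ⟨i, hi⟩ : ∃ i, σ i ≠ i := not_forall.mp fun h => hσ (Equiv.ext h)
    exact disjoint_left.mp (hT hi) ⟨s (σ i), rfl⟩ ⟨t i, (congrFun hs i).symm⟩
  obtain ⟨χ, hχB, hχA, -⟩ :=
    exists_continuous_zero_one_of_isClosed hB (isCompact_range hΦ).isClosed hdisj
  exact ⟨χ, fun t => hχA ⟨t, rfl⟩,
    fun σ hσ t => hχB (mem_iUnion₂.mpr ⟨σ, hσ, t, rfl⟩)⟩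

theorem exists_symmetric_extension_piMap [DecidableEq ι] (hTc : ∀ j, Continuous (T j))
    (hTinj : ∀ j, Injective (T j))
    (hT : Pairwise fun i j => Disjoint (range (T i)) (range (T j)))
    {g : (ι → K) → ℝ} (hg : Continuous g) :
    ∃ F : (ι → E) → ℝ, Continuous F ∧ (∀ σ : Equiv.Perm ι, ∀ x, F (x ∘ σ) = F x) ∧
      ∀ t, F (Pi.map T t) = g t := by
  have hΦ : IsClosedEmbedding (Pi.map T) :=
    (Continuous.piMap hTc).isClosedEmbedding (.piMap hTinj)
  obtain ⟨H, hH⟩ := ContinuousMap.exists_extension' hΦ ⟨g, hg⟩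
  obtain ⟨χ, hχ₁, hχ₀⟩ := exists_cutoff_piMap hTc hT
  refine ⟨symmetrize fun x => H x * χ x, (H.continuous.mul χ.continuous).symmetrize,
    symmetrize_comp_perm _, fun t => ?_⟩
  rw [symmetrize_eq_of_forall_ne_one fun σ hσ => by simp only [hχ₀ σ hσ t, mul_zero],
    hχ₁ t, mul_one]
  exact congrFun hH t

theorem stmt_13_general (d n : ℕ)
    (C : Fin n → Set (Fin d → ℝ))
    (hdisj : ∀ i j, i ≠ j → Disjoint (C i) (C j))
    (T : Fin n → unitCube d → (Fin d → ℝ))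
    (hTc : ∀ j, Continuous (T j))
    (hTC : ∀ j t, T j t ∈ C j)
    (hTinj : ∀ j, Function.Injective (T j))
    (g : (Fin n → unitCube d) → ℝ) (hg : Continuous g) :
    ∃ f : (Fin n → unitCube d) → ℝ, Continuous f ∧
      (∀ (σ : Equiv.Perm (Fin n)) (x : Fin n → unitCube d), f (fun i => x (σ i)) = f x) ∧
      ∀ (t x : Fin n → unitCube d), (∀ j, (x j : Fin d → ℝ) = T j (t j)) → f x = g t := by
  have hT : Pairwise fun i j => Disjoint (range (T i)) (range (T j)) := fun i j hij =>
    (hdisj i j hij).mono (range_subset_iff.mpr (hTC i)) (range_subset_iff.mpr (hTC j))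
  obtain ⟨F, hFc, hFσ, hFg⟩ := exists_symmetric_extension_piMap hTc hTinj hT hg
  refine ⟨fun x => F fun j => x j, hFc.comp (.piMap fun _ => continuous_subtype_val),
    fun σ x => hFσ σ fun j => x j, fun t x hx => ?_⟩
  rw [← hFg t]
  exact congrArg F (funext hx)

/-- given pairwise disjoint closed cubes `C j ⊂ (0,1)^d` with
(affine) homeomorphic parametrizations `T j : K → C j` and any continuous `g` on
`Kⁿ`, there is a continuous permutation-invariant `f` with
`f(T₁t₁,…,Tₙtₙ) = g(t₁,…,tₙ)`. -/
theorem stmt_13 (d n : ℕ)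
    (C : Fin n → Set (Fin d → ℝ))
    (hclosed : ∀ j, IsClosed (C j))
    (hsub : ∀ j, C j ⊆ {x | ∀ i, x i ∈ Set.Ioo (0 : ℝ) 1})
    (hdisj : ∀ i j, i ≠ j → Disjoint (C i) (C j))
    (T : Fin n → unitCube d → (Fin d → ℝ))
    (hTc : ∀ j, Continuous (T j))
    (hTC : ∀ j t, T j t ∈ C j)
    (hTinj : ∀ j, Function.Injective (T j))
    (g : (Fin n → unitCube d) → ℝ) (hg : Continuous g) :
    ∃ f : (Fin n → unitCube d) → ℝ, Continuous f ∧
      (∀ (σ : Equiv.Perm (Fin n)) (x : Fin n → unitCube d), f (fun i => x (σ i)) = f x) ∧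
      ∀ (t x : Fin n → unitCube d), (∀ j, (x j : Fin d → ℝ) = T j (t j)) → f x = g t :=
  stmt_13_general d n C hdisj T hTc hTC hTinj g hg
end

section
/- If a k-ary Janossy pooling architecture with latent dimension M is dense in the continuous permutation-invariant functions C_sym(Kⁿ), then the indexed k-Janossy architecture with the same latent dimension M is dense in C(Kⁿ). -/
structure LabeledCopy (X : Type*) [TopologicalSpace X] (ι : Type*) where
  embed : ι → X → X
  retract : ι → X → X
  bump : ι → X → ℝ
  continuous_embed : ∀ i, Continuous (embed i)
  continuous_retract : ∀ i, Continuous (retract i)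
  continuous_bump : ∀ i, Continuous (bump i)
  retract_embed : ∀ i y, retract i (embed i y) = y
  bump_embed_self : ∀ i y, bump i (embed i y) = 1
  bump_embed_of_ne : ∀ {i j}, j ≠ i → ∀ y, bump i (embed j y) = 0

namespace LabeledCopy

variable {X ι : Type*} [TopologicalSpace X] [Fintype ι] [DecidableEq ι] (L : LabeledCopy X ι)

noncomputable def symmetrize (g : (ι → X) → ℝ) (y : ι → X) : ℝ :=
  ∑ σ : Equiv.Perm ι, (∏ i, L.bump i (y (σ i))) * g (fun i => L.retract i (y (σ i)))

theorem continuous_symmetrize {g : (ι → X) → ℝ} (hg : Continuous g) :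
    Continuous (L.symmetrize g) := by
  unfold symmetrize
  refine continuous_finsetSum _ fun σ _ => .mul ?_ ?_
  · exact continuous_finsetProd _ fun i _ => (L.continuous_bump i).comp (continuous_apply _)
  · exact hg.comp (continuous_pi fun i => (L.continuous_retract i).comp (continuous_apply _))

theorem symmetrize_perm (g : (ι → X) → ℝ) (σ : Equiv.Perm ι) (y : ι → X) :
    L.symmetrize g (fun i => y (σ i)) = L.symmetrize g y :=
  Fintype.sum_equiv (Equiv.mulLeft σ) _ _ fun τ => by simp [Equiv.Perm.mul_apply]

theorem symmetrize_embed (g : (ι → X) → ℝ) (x : ι → X) :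
    L.symmetrize g (fun i => L.embed i (x i)) = g x := by
  unfold symmetrize
  rw [Finset.sum_eq_single_of_mem 1 (Finset.mem_univ _)]
  · simp [L.bump_embed_self, L.retract_embed]
  · intro σ _ hσ
    obtain ⟨i, hi⟩ : ∃ i, σ i ≠ i := not_forall.mp fun h => hσ (Equiv.ext h)
    rw [Finset.prod_eq_zero (Finset.mem_univ i) (L.bump_embed_of_ne hi _), zero_mul]

theorem exists_symmetric_extension {g : (ι → X) → ℝ} (hg : Continuous g) :
    ∃ f : (ι → X) → ℝ, Continuous f ∧
      (∀ (σ : Equiv.Perm ι) (y : ι → X), f (fun i => y (σ i)) = f y) ∧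
      ∀ x, f (fun i => L.embed i (x i)) = g x :=
  ⟨L.symmetrize g, L.continuous_symmetrize hg, L.symmetrize_perm g, L.symmetrize_embed g⟩

end LabeledCopy

namespace unitCube

open Set

variable {d : ℕ}

noncomputable def squeeze (n i : ℕ) (t : ℝ) : ℝ := (t + 2 * i) / (2 * n)

def unsqueeze (n i : ℕ) (t : ℝ) : ℝ := max 0 (min 1 (2 * n * t - 2 * i))

-- `1 - dist (2 n t) [2i, 2i+1]`, clamped to `[0, 1]`
def slabBump (n i : ℕ) (t : ℝ) : ℝ :=
  max 0 (min 1 (1 - max (2 * i - 2 * n * t) (2 * n * t - 2 * i - 1)))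

lemma two_mul_mul_squeeze {n i : ℕ} (hi : i < n) (t : ℝ) :
    2 * n * squeeze n i t = t + 2 * i := by
  have : (n : ℝ) ≠ 0 := by exact_mod_cast (Nat.zero_lt_of_lt hi).ne'
  unfold squeeze
  field_simp

lemma mapsTo_squeeze {n i : ℕ} (hi : i < n) : MapsTo (squeeze n i) (Icc 0 1) (Icc 0 1) := by
  intro t ht
  have hi' : (i : ℝ) + 1 ≤ n := by exact_mod_cast hi
  have := two_mul_mul_squeeze hi t
  constructor <;> nlinarith [ht.1, ht.2]

lemma mapsTo_unsqueeze (n i : ℕ) : MapsTo (unsqueeze n i) (Icc 0 1) (Icc 0 1) := fun _ _ =>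
  ⟨le_max_left _ _, max_le zero_le_one (min_le_left _ _)⟩

lemma unsqueeze_squeeze {n i : ℕ} (hi : i < n) {t : ℝ} (ht : t ∈ Icc 0 1) :
    unsqueeze n i (squeeze n i t) = t := by
  rw [unsqueeze, two_mul_mul_squeeze hi, add_sub_cancel_right, min_eq_right ht.2,
    max_eq_right ht.1]

lemma slabBump_squeeze_self {n i : ℕ} (hi : i < n) {t : ℝ} (ht : t ∈ Icc 0 1) :
    slabBump n i (squeeze n i t) = 1 := by
  rw [slabBump, two_mul_mul_squeeze hi]
  have : max (2 * (i : ℝ) - (t + 2 * i)) (t + 2 * i - 2 * i - 1) ≤ 0 :=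
    max_le (by linarith [ht.1]) (by linarith [ht.2])
  rw [min_eq_left (by linarith), max_eq_right zero_le_one]

lemma slabBump_squeeze_of_ne {n i j : ℕ} (hj : j < n) (hji : j ≠ i) {t : ℝ}
    (ht : t ∈ Icc 0 1) : slabBump n i (squeeze n j t) = 0 := by
  rw [slabBump, two_mul_mul_squeeze hj]
  have : 1 ≤ max (2 * (i : ℝ) - (t + 2 * j)) (t + 2 * j - 2 * i - 1) := by
    rcases hji.lt_or_gt with hlt | hlt
    · have : (j : ℝ) + 1 ≤ i := by exact_mod_cast hlt
      exact le_max_of_le_left (by linarith [ht.2])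
    · have : (i : ℝ) + 1 ≤ j := by exact_mod_cast hlt
      exact le_max_of_le_right (by linarith [ht.1])
  rw [min_eq_right (by linarith), max_eq_left (by linarith)]

lemma continuous_squeeze (n i : ℕ) : Continuous (squeeze n i) := by
  unfold squeeze; fun_prop

lemma continuous_unsqueeze (n i : ℕ) : Continuous (unsqueeze n i) := by
  unfold unsqueeze; fun_prop

lemma continuous_slabBump (n i : ℕ) : Continuous (slabBump n i) := by
  unfold slabBump; fun_prop

lemma update_mem (y : unitCube d) (a : Fin d) {t : ℝ} (ht : t ∈ Icc 0 1) :
    Function.update (y : Fin d → ℝ) a t ∈ unitCube d := by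
  intro j
  rcases eq_or_ne j a with rfl | h
  · simpa
  · simpa [h] using y.2 j

def updateCoord (a : Fin d) (u : ℝ → ℝ) (hu : MapsTo u (Icc 0 1) (Icc 0 1)) (y : unitCube d) :
    unitCube d :=
  ⟨Function.update y a (u (y.1 a)), update_mem y a (hu (y.2 a))⟩

lemma updateCoord_apply_self (a : Fin d) {u : ℝ → ℝ} (hu : MapsTo u (Icc 0 1) (Icc 0 1)) (y : unitCube d) :
    (updateCoord a u hu y : Fin d → ℝ) a = u ((y : Fin d → ℝ) a) := by
  simp [updateCoord]

lemma continuous_updateCoord (a : Fin d) {u : ℝ → ℝ} (hu : MapsTo u (Icc 0 1) (Icc 0 1)) (hc : Continuous u) :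
    Continuous (updateCoord (d := d) a u hu) :=
  (continuous_subtype_val.update a (hc.comp ((continuous_apply a).comp
    continuous_subtype_val))).subtype_mk _

lemma updateCoord_updateCoord (a : Fin d) {u v : ℝ → ℝ} (hu : MapsTo u (Icc 0 1) (Icc 0 1))
    (hv : MapsTo v (Icc 0 1) (Icc 0 1)) (y : unitCube d) :
    updateCoord a v hv (updateCoord a u hu y) = updateCoord a (v ∘ u) (hv.comp hu) y := by
  ext1; simp [updateCoord]

lemma updateCoord_eq_self (a : Fin d) {u : ℝ → ℝ} (hu : MapsTo u (Icc 0 1) (Icc 0 1)) (y : unitCube d)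
    (h : u ((y : Fin d → ℝ) a) = (y : Fin d → ℝ) a) : updateCoord a u hu y = y := by
  ext1; simp [updateCoord, h]

noncomputable def labeledCopy (a : Fin d) (n : ℕ) : LabeledCopy (unitCube d) (Fin n) where
  embed i := updateCoord a (squeeze n i) (mapsTo_squeeze i.2)
  retract i := updateCoord a (unsqueeze n i) (mapsTo_unsqueeze n i)
  bump i y := slabBump n i ((y : Fin d → ℝ) a)
  continuous_embed i := continuous_updateCoord a _ (continuous_squeeze n i)
  continuous_retract i := continuous_updateCoord a _ (continuous_unsqueeze n i)
  continuous_bump i :=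
    (continuous_slabBump n i).comp ((continuous_apply a).comp continuous_subtype_val)
  retract_embed i y := by
    rw [updateCoord_updateCoord]
    exact updateCoord_eq_self a _ y (unsqueeze_squeeze i.2 (y.2 a))
  bump_embed_self i y := by
    rw [updateCoord_apply_self]
    exact slabBump_squeeze_self i.2 (y.2 a)
  bump_embed_of_ne {i j} hji y := by
    rw [updateCoord_apply_self]
    exact slabBump_squeeze_of_ne j.2 (Fin.val_ne_of_ne hji) (y.2 a)

end unitCube

theorem stmt_18_general (d n k M : ℕ) (hd : 1 ≤ d)
    (hdense : ∀ f : (Fin n → unitCube d) → ℝ, Continuous f →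
      (∀ (σ : Equiv.Perm (Fin n)) (x : Fin n → unitCube d), f (fun i => x (σ i)) = f x) →
      ∀ ε : ℝ, 0 < ε →
      ∃ (φ : (Fin k → unitCube d) → Fin M → ℝ) (ρ : (Fin M → ℝ) → ℝ),
        Continuous φ ∧ Continuous ρ ∧
        ∀ x, |f x - ρ (∑ I : Fin k → Fin n, φ (fun j => x (I j)))| ≤ ε) :
    ∀ g : (Fin n → unitCube d) → ℝ, Continuous g → ∀ ε : ℝ, 0 < ε →
      ∃ (φ : (Fin k → Fin n) → (Fin k → unitCube d) → Fin M → ℝ) (ρ : (Fin M → ℝ) → ℝ),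
        (∀ I, Continuous (φ I)) ∧ Continuous ρ ∧
        ∀ x, |g x - ρ (∑ I : Fin k → Fin n, φ I (fun j => x (I j)))| ≤ ε := by
  intro g hg ε hε
  let L := unitCube.labeledCopy (d := d) ⟨0, hd⟩ n
  obtain ⟨f, hf, hf_perm, hf_embed⟩ := L.exists_symmetric_extension hg
  obtain ⟨φ, ρ, hφ, hρ, happrox⟩ := hdense f hf hf_perm ε hε
  refine ⟨fun I z => φ (fun j => L.embed (I j) (z j)), ρ, fun I => ?_, hρ, fun x => ?_⟩
  · exact hφ.comp (continuous_pi fun j => (L.continuous_embed _).comp (continuous_apply j))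
  · simpa only [hf_embed] using happrox (fun i => L.embed i (x i))

/-- if the (shared-encoder) k-ary Janossy pooling architecture with
latent dimension `M` is dense in the continuous permutation-invariant functions on
`Kⁿ`, then the indexed k-Janossy architecture with latent dimension `M` is dense
in all of `C(Kⁿ)`. -/
theorem stmt_18 (d n k M : ℕ) (hd : 1 ≤ d) (hk : 1 ≤ k) (hkn : k ≤ n)
    (hdense : ∀ f : (Fin n → unitCube d) → ℝ, Continuous f →
      (∀ (σ : Equiv.Perm (Fin n)) (x : Fin n → unitCube d), f (fun i => x (σ i)) = f x) →
      ∀ ε : ℝ, 0 < ε →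
      ∃ (φ : (Fin k → unitCube d) → Fin M → ℝ) (ρ : (Fin M → ℝ) → ℝ),
        Continuous φ ∧ Continuous ρ ∧
        ∀ x, |f x - ρ (∑ I : Fin k → Fin n, φ (fun j => x (I j)))| ≤ ε) :
    ∀ g : (Fin n → unitCube d) → ℝ, Continuous g → ∀ ε : ℝ, 0 < ε →
      ∃ (φ : (Fin k → Fin n) → (Fin k → unitCube d) → Fin M → ℝ) (ρ : (Fin M → ℝ) → ℝ),
        (∀ I, Continuous (φ I)) ∧ Continuous ρ ∧
        ∀ x, |g x - ρ (∑ I : Fin k → Fin n, φ I (fun j => x (I j)))| ≤ ε :=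
  stmt_18_general d n k M hd hdense
end
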